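/- arXiv:2009.05660 — 9 statements merged into one kernel-verified Lean document; each statement's English description precedes it below -/
import Mathlib

section
/- Let M be an m×n real matrix, P^in a partitioning of {1,…,n} into k blocks, and P^out a partitioning of {1,…,m}. Then for every PCM C for P^in and every PCM D for P^out, the scaled merging ScaleCols(Dᵀ M C, (|P^in_1|,…,|P^in_k|)) lies in the convex hull of the finite set { ScaleCols(Fᵀ M E, (|P^in_1|,…,|P^in_k|)) : E a binary PCM for P^in, F a binary PCM for P^out }. Consequently, the convex hull of the set of all scaled mergings of M equals the convex hull of the set of scaled mergings of M determined by binary PCMs. -/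
noncomputable section

/-- A partitioning of `{1,…,n}` (modeled as `Fin n`) into `k` blocks:
nonempty, pairwise disjoint subsets whose union is everything. -/
def IsPartition {n k : ℕ} (P : Fin k → Finset (Fin n)) : Prop :=
  (∀ j, (P j).Nonempty) ∧
  (∀ j₁ j₂, j₁ ≠ j₂ → Disjoint (P j₁) (P j₂)) ∧
  (∀ i : Fin n, ∃ j, i ∈ P j)

/-- A partition combination matrix (PCM) for a partitioning `P`:
nonnegative entries, each column sums to 1, and `C i j = 0` whenever `i ∉ P j`. -/
def IsPCM {n k : ℕ} (P : Fin k → Finset (Fin n)) (C : Matrix (Fin n) (Fin k) ℝ) : Prop :=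
  (∀ i j, 0 ≤ C i j) ∧ (∀ j, ∑ i, C i j = 1) ∧ (∀ i j, i ∉ P j → C i j = 0)

/-- A binary PCM: a PCM all of whose entries are `0` or `1`. -/
def IsBinPCM {n k : ℕ} (P : Fin k → Finset (Fin n)) (C : Matrix (Fin n) (Fin k) ℝ) : Prop :=
  IsPCM P C ∧ ∀ i j, C i j = 0 ∨ C i j = 1

/-- `ScaleCols(M, w)_{i,j} = M_{i,j} * w_j`. -/
def scaleCols {m k : ℕ} (M : Matrix (Fin m) (Fin k) ℝ) (w : Fin k → ℝ) :
    Matrix (Fin m) (Fin k) ℝ :=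
  fun i j => M i j * w j

/-- The scaled merging `ScaleCols(Dᵀ M C, (|P^in_1|,…,|P^in_k|))` of `M`
determined by PCMs `C` (for `Pin`) and `D` (for the output partitioning). -/
def scaledMerging {m n k ko : ℕ} (M : Matrix (Fin m) (Fin n) ℝ)
    (Pin : Fin k → Finset (Fin n))
    (C : Matrix (Fin n) (Fin k) ℝ) (D : Matrix (Fin m) (Fin ko) ℝ) :
    Matrix (Fin ko) (Fin k) ℝ :=
  scaleCols (D.transpose * M * C) (fun j => ((Pin j).card : ℝ))

/-- The mean representative `⟨v⟩_P`, with `j`-th component `(∑_{i ∈ P_j} v_i)/|P_j|`. -/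
def meanRep {n k : ℕ} (P : Fin k → Finset (Fin n)) (v : Fin n → ℝ) : Fin k → ℝ :=
  fun j => (∑ i ∈ P j, v i) / ((P j).card : ℝ)

/-- Membership in the convex representative set `R(v, P)`:
`min_{i ∈ P_j} v_i ≤ z_j ≤ max_{i ∈ P_j} v_i` for every block `j`
(stated existentially, which is equivalent for nonempty blocks). -/
def InRepSet {n k : ℕ} (P : Fin k → Finset (Fin n)) (v : Fin n → ℝ) (z : Fin k → ℝ) : Prop :=
  ∀ j, (∃ i ∈ P j, v i ≤ z j) ∧ (∃ i ∈ P j, z j ≤ v i)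

/-- The Weakened Intermediate Value Property: for all `a_0 ≤ ⋯ ≤ a_n` there is
`b ∈ [a_0, a_n]` with `f b` the average of the `f (a_i)`. -/
def WIVP (f : ℝ → ℝ) : Prop :=
  ∀ (n : ℕ) (a : Fin (n + 1) → ℝ), Monotone a →
    ∃ b ∈ Set.Icc (a 0) (a (Fin.last n)), f b = (∑ i, f (a i)) / (n + 1 : ℝ)

section Aux

/-- Sum over all functions of a product factorizes into a product of sums. -/
lemma sum_prod_pi {k n : ℕ} (g : Fin k → Fin n → ℝ) :
    ∑ s : Fin k → Fin n, ∏ j, g j (s j) = ∏ j, ∑ i, g j i := by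
  rw [Finset.prod_univ_sum]
  simp

/-- Marginalization over selection functions. -/
lemma marg {k n : ℕ} (C : Matrix (Fin n) (Fin k) ℝ) (hC : ∀ j, ∑ i, C i j = 1)
    (j : Fin k) (f : Fin n → ℝ) :
    ∑ s : Fin k → Fin n, (∏ j', C (s j') j') * f (s j) = ∑ i, C i j * f i := by
  have h1 : ∀ s : Fin k → Fin n,
      (∏ j', C (s j') j')
          * f (s j) = ∏ j', (C (s j') j' * if j' = j then f (s j') else 1) := by
    intro s
    rw [Finset.prod_mul_distrib]
    congr 1
    simp
  calc ∑ s : Fin k → Fin n, (∏ j', C (s j') j') * f (s j)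
      = ∑ s : Fin k → Fin n, ∏ j', (C (s j') j' * if j' = j then f (s j') else 1) :=
        Finset.sum_congr rfl fun s _ => h1 s
    _ = ∏ j', ∑ i, (C i j' * if j' = j then f i else 1) :=
        sum_prod_pi (fun j' i => C i j' * if j' = j then f i else 1)
    _ = ∏ j', (if j' = j then ∑ i, C i j * f i else 1) := by
        refine Finset.prod_congr rfl fun j' _ => ?_
        by_cases h : j' = j
        · subst h; simp
        · simp [h, hC j']
    _ = ∑ i, C i j * f i := by simp

/-- The binary selection matrix of a selection function. -/
def selMat {a b : ℕ} (s : Fin b → Fin a) : Matrix (Fin a) (Fin b) ℝ :=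
  fun i j => if i = s j then 1 else 0

lemma selMat_isBinPCM {a b : ℕ} (P : Fin b → Finset (Fin a)) (s : Fin b → Fin a)
    (hs : ∀ j, s j ∈ P j) : IsBinPCM P (selMat s) := by
  refine ⟨⟨fun i j => ?_, fun j => ?_, fun i j hij => ?_⟩, fun i j => ?_⟩
  · unfold selMat; split <;> norm_num
  · simp [selMat]
  · simp only [selMat, ite_eq_right_iff, one_ne_zero, imp_false]
    rintro rfl; exact hij (hs j)
  · unfold selMat; split <;> simp

lemma selMat_sum_one {a b : ℕ} (C : Matrix (Fin a) (Fin b) ℝ)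
    (hC : ∀ j, ∑ i, C i j = 1) :
    ∑ s : Fin b → Fin a, ∏ j', C (s j') j' = 1 := by
  rw [sum_prod_pi (fun j i => C i j)]
  simp [hC]

lemma scaledMerging_mem_aux {m n k ko : ℕ}
    (M : Matrix (Fin m) (Fin n) ℝ)
    (Pin : Fin k → Finset (Fin n)) (Pout : Fin ko → Finset (Fin m))
    (C : Matrix (Fin n) (Fin k) ℝ) (D : Matrix (Fin m) (Fin ko) ℝ)
    (hC : IsPCM Pin C) (hD : IsPCM Pout D) :
    scaledMerging M Pin C D ∈
      convexHull ℝ {H : Matrix (Fin ko) (Fin k) ℝ |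
        ∃ E F, IsBinPCM Pin E ∧ IsBinPCM Pout F ∧ H = scaledMerging M Pin E F} := by
  classical
  obtain ⟨hC0, hC1, hCsupp⟩ := hC
  obtain ⟨hD0, hD1, hDsupp⟩ := hD
  let w : (Fin k → Fin n) × (Fin ko → Fin m) → ℝ :=
    fun p => (∏ j, C (p.1 j) j) * (∏ o, D (p.2 o) o)
  let Z : (Fin k → Fin n) × (Fin ko → Fin m) → Matrix (Fin ko) (Fin k) ℝ :=
    fun p => scaledMerging M Pin (selMat p.1) (selMat p.2)
  let T : Finset ((Fin k → Fin n) × (Fin ko → Fin m)) :=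
    Finset.univ.filter fun p => (∀ j, p.1 j ∈ Pin j) ∧ (∀ o, p.2 o ∈ Pout o)
  have hZ : ∀ p : (Fin k → Fin n) × (Fin ko → Fin m), ∀ o j,
      Z p o j = M (p.2 o) (p.1 j) * ((Pin j).card : ℝ) := by
    intro p o j
    simp [Z, scaledMerging, scaleCols, Matrix.mul_apply, Matrix.transpose_apply, selMat,
      ite_mul, mul_ite, Finset.sum_ite_eq, Finset.sum_ite_eq']
  have hzero : ∀ p : (Fin k → Fin n) × (Fin ko → Fin m), p ∉ T → w p = 0 := by
    intro p hp
    simp only [T, Finset.mem_filter, Finset.mem_univ, true_and, not_and_or, not_forall] at hp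
    rcases hp with ⟨j, hj⟩ | ⟨o, ho⟩
    · exact mul_eq_zero.mpr (Or.inl (Finset.prod_eq_zero (Finset.mem_univ j) (hCsupp _ _ hj)))
    · exact mul_eq_zero.mpr (Or.inr (Finset.prod_eq_zero (Finset.mem_univ o) (hDsupp _ _ ho)))
  have huniv : scaledMerging M Pin C D = ∑ p : (Fin k → Fin n) × (Fin ko → Fin m), w p • Z p := by
    ext o j
    have e1 : (∑ p : (Fin k → Fin n) × (Fin ko → Fin m), w p • Z p) o j
        = ∑ p : (Fin k → Fin n) × (Fin ko → Fin m), w p * Z p o j := by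
      simp [Matrix.sum_apply]
    rw [e1]
    have e2 : (∑ p : (Fin k → Fin n) × (Fin ko → Fin m), w p * Z p o j)
        = ∑ p : (Fin k → Fin n) × (Fin ko → Fin m),
            w p * (M (p.2 o) (p.1 j) * ((Pin j).card : ℝ)) :=
      Finset.sum_congr rfl fun p _ => by rw [hZ]
    rw [e2, Fintype.sum_prod_type]
    have step1 : ∀ s : Fin k → Fin n,
        (∑ t : Fin ko → Fin m, w (s, t) * (M (t o) (s j) * ((Pin j).card : ℝ)))
          = ((∏ j', C (s j') j') * (∑ i', D i' o * M i' (s j))) * ((Pin j).card : ℝ) := by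
      intro s
      rw [← marg D hD1 o (fun i' => M i' (s j))]
      rw [Finset.mul_sum, Finset.sum_mul]
      refine Finset.sum_congr rfl fun t _ => ?_
      simp only [w]
      ring
    rw [Finset.sum_congr rfl fun s _ => step1 s]
    rw [← Finset.sum_mul, marg C hC1 j (fun i => ∑ i', D i' o * M i' i)]
    simp only [scaledMerging, scaleCols, Matrix.mul_apply, Matrix.transpose_apply]
    congr 1
    exact Finset.sum_congr rfl fun i _ => mul_comm _ _
  have key : scaledMerging M Pin C D = ∑ p ∈ T, w p • Z p := by
    rw [huniv]
    exact (Finset.sum_subset (Finset.subset_univ T)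
      fun p _ hp => by rw [hzero p hp, zero_smul]).symm
  rw [key]
  refine Convex.sum_mem (convex_convexHull ℝ _)
    (fun p _ => mul_nonneg (Finset.prod_nonneg fun j _ => hC0 _ _)
      (Finset.prod_nonneg fun o _ => hD0 _ _)) ?_ ?_
  · rw [Finset.sum_subset (Finset.subset_univ T) fun p _ hp => hzero p hp]
    have hws : ∑ p : (Fin k → Fin n) × (Fin ko → Fin m), w p
        = (∑ s : Fin k → Fin n, ∏ j', C (s j') j')
          * (∑ t : Fin ko → Fin m, ∏ o', D (t o') o') := by
      rw [Finset.sum_mul_sum, Fintype.sum_prod_type]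
    rw [hws, selMat_sum_one C hC1, selMat_sum_one D hD1, mul_one]
  · intro p hp
    simp only [T, Finset.mem_filter, Finset.mem_univ, true_and] at hp
    exact subset_convexHull ℝ _
      ⟨selMat p.1, selMat p.2, selMat_isBinPCM _ _ hp.1, selMat_isBinPCM _ _ hp.2, rfl⟩

end Aux

/-- every scaled merging of `M` lies in the convex hull of the
scaled mergings determined by binary PCMs; consequently the convex hulls of
the set of all scaled mergings and of the binary scaled mergings coincide. -/
theorem scaledMerging_mem_convexHull_binary {m n k ko : ℕ}
    (M : Matrix (Fin m) (Fin n) ℝ)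
    (Pin : Fin k → Finset (Fin n)) (Pout : Fin ko → Finset (Fin m))
    (hPin : IsPartition Pin) (hPout : IsPartition Pout) :
    (∀ (C : Matrix (Fin n) (Fin k) ℝ) (D : Matrix (Fin m) (Fin ko) ℝ),
      IsPCM Pin C → IsPCM Pout D →
      scaledMerging M Pin C D ∈
        convexHull ℝ {H : Matrix (Fin ko) (Fin k) ℝ |
          ∃ E F, IsBinPCM Pin E ∧ IsBinPCM Pout F ∧ H = scaledMerging M Pin E F}) ∧
    convexHull ℝ {H : Matrix (Fin ko) (Fin k) ℝ |
        ∃ C D, IsPCM Pin C ∧ IsPCM Pout D ∧ H = scaledMerging M Pin C D} =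
      convexHull ℝ {H : Matrix (Fin ko) (Fin k) ℝ |
        ∃ E F, IsBinPCM Pin E ∧ IsBinPCM Pout F ∧ H = scaledMerging M Pin E F} := by
  constructor
  · exact fun C D hC hD => scaledMerging_mem_aux M Pin Pout C D hC hD
  · refine Set.Subset.antisymm ?_ (convexHull_mono ?_)
    · refine convexHull_min ?_ (convex_convexHull ℝ _)
      rintro H ⟨C, D, hC, hD, rfl⟩
      exact scaledMerging_mem_aux M Pin Pout C D hC hD
    · rintro H ⟨E, F, hE, hF, rfl⟩
      exact ⟨E, F, hE.1, hF.1, rfl⟩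
end
end

section
/- There exists a function f : ℝ → ℝ that satisfies the Weakened Intermediate Value Property but does not satisfy the Intermediate Value Property. In particular, any function f : ℝ → ℝ such that the image under f of every nonempty open interval is exactly the set of rational numbers satisfies the WIVP but not the IVP, and such a function exists. -/
noncomputable section

/-- The Intermediate Value Property: for all `a ≤ b` and every `y` between
`f a` and `f b` there is `c ∈ [a, b]` with `f c = y`. -/
def IVP (f : ℝ → ℝ) : Prop :=
  ∀ a b : ℝ, a ≤ b → ∀ y ∈ Set.uIcc (f a) (f b), ∃ c ∈ Set.Icc a b, f c = y


private def Γaux : AddSubgroup ℝ := AddMonoidHom.range ((Rat.castHom ℝ).toAddMonoidHom)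

private instance : Countable Γaux := by
  have : Countable (Set.range ((↑) : ℚ → ℝ)) := (Set.countable_range _).to_subtype
  exact this

private lemma Qaux_uncountable : Uncountable (ℝ ⧸ Γaux) := by
  by_contra h
  rw [not_uncountable_iff] at h
  have e : ℝ ≃ (ℝ ⧸ Γaux) × Γaux := AddSubgroup.addGroupEquivQuotientProdAddSubgroup
  have : Countable ℝ := Countable.of_equiv _ e.symm
  exact (not_countable (α := ℝ)) this

private def myPhi : (ℝ ⧸ Γaux) → ℚ := by
  have : Uncountable (ℝ ⧸ Γaux) := Qaux_uncountable
  exact Function.invFun ((Denumerable.eqv ℚ).toEmbedding.trans (Infinite.natEmbedding _))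

private lemma myPhi_surj : Function.Surjective myPhi := by
  have : Uncountable (ℝ ⧸ Γaux) := Qaux_uncountable
  exact Function.invFun_surjective ((Denumerable.eqv ℚ).toEmbedding.trans
    (Infinite.natEmbedding _)).injective

private def myF : ℝ → ℝ := fun x => (myPhi (QuotientAddGroup.mk x) : ℝ)

private lemma myF_image {a b : ℝ} (hab : a < b) :
    myF '' Set.Ioo a b = Set.range ((↑) : ℚ → ℝ) := by
  ext y
  constructor
  · rintro ⟨x, -, rfl⟩
    exact ⟨_, rfl⟩
  · rintro ⟨q, rfl⟩
    obtain ⟨z, hz⟩ := myPhi_surj q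
    obtain ⟨x, rfl⟩ := QuotientAddGroup.mk_surjective z
    obtain ⟨r, hr1, hr2⟩ := exists_rat_btwn (sub_lt_sub_right hab x)
    refine ⟨x + r, ⟨by linarith, by linarith⟩, ?_⟩
    have hmk : QuotientAddGroup.mk (x + (r:ℝ)) = (QuotientAddGroup.mk x : ℝ ⧸ Γaux) := by
      rw [QuotientAddGroup.eq_iff_sub_mem]
      simpa [add_sub_cancel_left] using ⟨r, rfl⟩
    simp [myF, hmk, hz]

private lemma f_rat (f : ℝ → ℝ)
    (hf : ∀ a b : ℝ, a < b → f '' Set.Ioo a b = Set.range ((↑) : ℚ → ℝ)) :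
    ∀ x : ℝ, ∃ q : ℚ, f x = q := by
  intro x
  have hx : f x ∈ f '' Set.Ioo (x - 1) (x + 1) := ⟨x, ⟨by linarith, by linarith⟩, rfl⟩
  rw [hf _ _ (by linarith)] at hx
  obtain ⟨q, hq⟩ := hx
  exact ⟨q, hq.symm⟩

private lemma f_wivp (f : ℝ → ℝ)
    (hf : ∀ a b : ℝ, a < b → f '' Set.Ioo a b = Set.range ((↑) : ℚ → ℝ)) : WIVP f := by
  intro n a ha
  obtain ⟨q, hq⟩ : ∃ q : Fin (n+1) → ℚ, ∀ i, f (a i) = q i := by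
    choose q hq using fun i => f_rat f hf (a i)
    exact ⟨q, hq⟩
  have havg : (∑ i, f (a i)) / (n + 1 : ℝ) = (((∑ i, q i) / (n + 1 : ℚ) : ℚ) : ℝ) := by
    push_cast
    rw [Finset.sum_congr rfl (fun i _ => hq i)]
  rcases eq_or_lt_of_le (ha (Fin.zero_le (Fin.last n))) with heq | hlt
  · have hall : ∀ i, a i = a 0 :=
      fun i => le_antisymm (heq ▸ ha (Fin.le_last i)) (ha (Fin.zero_le i))
    refine ⟨a 0, ⟨le_refl _, heq.le⟩, ?_⟩
    have : ∑ i, f (a i) = (n + 1 : ℝ) * f (a 0) := by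
      rw [Finset.sum_congr rfl (fun i _ => by rw [hall i])]
      simp [Finset.sum_const, mul_comm]
    rw [this, mul_div_cancel_left₀]
    positivity
  · have : (((∑ i, q i) / (n + 1 : ℚ) : ℚ) : ℝ) ∈ f '' Set.Ioo (a 0) (a (Fin.last n)) := by
      rw [hf _ _ hlt]; exact ⟨_, rfl⟩
    obtain ⟨b, hb, hfb⟩ := this
    exact ⟨b, Set.Ioo_subset_Icc_self hb, by rw [hfb, havg]⟩

private lemma f_not_ivp (f : ℝ → ℝ)
    (hf : ∀ a b : ℝ, a < b → f '' Set.Ioo a b = Set.range ((↑) : ℚ → ℝ)) : ¬ IVP f := by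
  intro h
  have h0 : ((0:ℚ):ℝ) ∈ f '' Set.Ioo (0:ℝ) 1 := by rw [hf _ _ one_pos]; exact ⟨_, rfl⟩
  have h3 : ((3:ℚ):ℝ) ∈ f '' Set.Ioo (0:ℝ) 1 := by rw [hf _ _ one_pos]; exact ⟨_, rfl⟩
  obtain ⟨x, -, hx⟩ := h0
  obtain ⟨y, -, hy⟩ := h3
  have hsq : Real.sqrt 2 ∈ Set.uIcc (f (min x y)) (f (max x y)) := by
    have h2 : (0:ℝ) ≤ Real.sqrt 2 := Real.sqrt_nonneg 2
    have h2' : Real.sqrt 2 ≤ 3 := by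
      rw [show (3:ℝ) = Real.sqrt 9 by rw [show (9:ℝ) = 3^2 by norm_num, Real.sqrt_sq]; norm_num]
      exact Real.sqrt_le_sqrt (by norm_num)
    rcases le_total x y with hxy | hxy
    · rw [min_eq_left hxy, max_eq_right hxy, hx, hy]
      simp only [Set.uIcc_of_le (by norm_num : ((0:ℚ):ℝ) ≤ ((3:ℚ):ℝ))]
      exact ⟨by simpa using h2, by simpa using h2'⟩
    · rw [min_eq_right hxy, max_eq_left hxy, hx, hy]
      rw [Set.uIcc_comm]
      simp only [Set.uIcc_of_le (by norm_num : ((0:ℚ):ℝ) ≤ ((3:ℚ):ℝ))]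
      exact ⟨by simpa using h2, by simpa using h2'⟩
  obtain ⟨c, -, hc⟩ := h (min x y) (max x y) (min_le_max) _ hsq
  obtain ⟨q, hq⟩ := f_rat f hf c
  exact irrational_sqrt_two ⟨q, by rw [← hc, hq]⟩

/-- there is a function satisfying the WIVP but not the IVP;
in particular any function mapping every nonempty open interval onto exactly
the rationals is such a function, and such a function exists. -/
theorem wivp_strictly_weaker_than_ivp :
    (∃ f : ℝ → ℝ, WIVP f ∧ ¬ IVP f) ∧
    (∀ f : ℝ → ℝ,
      (∀ a b : ℝ, a < b → f '' Set.Ioo a b = Set.range ((↑) : ℚ → ℝ)) →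
      WIVP f ∧ ¬ IVP f) ∧
    (∃ f : ℝ → ℝ, ∀ a b : ℝ, a < b → f '' Set.Ioo a b = Set.range ((↑) : ℚ → ℝ)) := by
  refine ⟨⟨myF, f_wivp myF (fun a b h => myF_image h), f_not_ivp myF (fun a b h => myF_image h)⟩,
    fun f hf => ⟨f_wivp f hf, f_not_ivp f hf⟩,
    ⟨myF, fun a b h => myF_image h⟩⟩
end
end

section
/- Let σ : ℝ → ℝ satisfy the Weakened Intermediate Value Property, let w ∈ ℝ^n, and let P be a partitioning of {1,…,n} into k blocks. Then there exists a vector w' ∈ R(w, P) such that σ applied componentwise to w' equals the mean representative ⟨σ(w)⟩_P of the componentwise image σ(w) under P. -/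
/-! Blocks are treated one at a time. Sorting the values of `w` on a block (`Tuple.sort`) gives a
monotone tuple, and the WIVP applied to it produces a point between the smallest and largest of
these values at which `σ` equals the block average of `σ ∘ w`. -/

noncomputable section

theorem WIVP.exists_apply_eq_average_fin {f : ℝ → ℝ} (hf : WIVP f) {m : ℕ}
    (a : Fin (m + 1) → ℝ) :
    ∃ b, (∃ i, a i ≤ b) ∧ (∃ i, b ≤ a i) ∧ f b = (∑ i, f (a i)) / (m + 1 : ℝ) := by
  set τ := Tuple.sort a
  obtain ⟨b, hb, hfb⟩ := hf m (a ∘ τ) (Tuple.monotone_sort a)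
  refine ⟨b, ⟨τ 0, hb.1⟩, ⟨τ (Fin.last m), hb.2⟩, ?_⟩
  rw [hfb, Function.comp_def, Equiv.sum_comp τ (fun i => f (a i))]

theorem WIVP.exists_apply_eq_average {f : ℝ → ℝ} (hf : WIVP f) {ι : Type*} [Fintype ι]
    [Nonempty ι] (v : ι → ℝ) :
    ∃ b, (∃ i, v i ≤ b) ∧ (∃ i, b ≤ v i) ∧
      f b = (∑ i, f (v i)) / (Fintype.card ι : ℝ) := by
  obtain ⟨m, hm⟩ := Nat.exists_eq_add_one_of_ne_zero (Fintype.card_ne_zero (α := ι))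
  set e : ι ≃ Fin (m + 1) := Fintype.equivFinOfCardEq hm
  obtain ⟨b, ⟨i, hi⟩, ⟨i', hi'⟩, hfb⟩ := hf.exists_apply_eq_average_fin (v ∘ e.symm)
  refine ⟨b, ⟨e.symm i, hi⟩, ⟨e.symm i', hi'⟩, ?_⟩
  rw [hfb, hm, Function.comp_def, Equiv.sum_comp e.symm (fun i => f (v i)), Nat.cast_succ]

theorem WIVP.exists_apply_eq_finset_average {f : ℝ → ℝ} (hf : WIVP f) {ι : Type*}
    {s : Finset ι} (hs : s.Nonempty) (v : ι → ℝ) :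
    ∃ b, (∃ i ∈ s, v i ≤ b) ∧ (∃ i ∈ s, b ≤ v i) ∧
      f b = (∑ i ∈ s, f (v i)) / (s.card : ℝ) := by
  have : Nonempty s := hs.coe_sort
  obtain ⟨b, ⟨i, hi⟩, ⟨i', hi'⟩, hfb⟩ := hf.exists_apply_eq_average fun i : s => v i
  refine ⟨b, ⟨i, i.2, hi⟩, ⟨i', i'.2, hi'⟩, ?_⟩
  rwa [Finset.sum_coe_sort s (fun i => f (v i)), Fintype.card_coe] at hfb

/-- for `σ` satisfying the WIVP, `w ∈ ℝ^n`, and a partitioning `P`,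
there is `w' ∈ R(w, P)` with `σ(w') = ⟨σ(w)⟩_P` componentwise. -/
theorem exists_repSet_preimage_of_mean {n k : ℕ} (σ : ℝ → ℝ) (hσ : WIVP σ)
    (w : Fin n → ℝ) (P : Fin k → Finset (Fin n)) (hP : IsPartition P) :
    ∃ w' : Fin k → ℝ, InRepSet P w w' ∧
      (fun j => σ (w' j)) = meanRep P (fun i => σ (w i)) := by
  choose w' hw'_ge hw'_le hσw' using fun j => hσ.exists_apply_eq_finset_average (hP.1 j) w
  exact ⟨w', fun j => ⟨hw'_ge j, hw'_le j⟩, funext hσw'⟩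
end
end

section
/- Let M be an m×n real matrix, P^in a partitioning of {1,…,n} into k blocks, P^out a partitioning of {1,…,m}, v ∈ ℝ^n a vector with nonnegative entries, and w' ∈ R(M v, P^out). Then there exist a PCM C for P^in and a PCM D for P^out such that the scaled merging H = ScaleCols(Dᵀ M C, (|P^in_1|,…,|P^in_k|)) satisfies H · ⟨v⟩_{P^in} = w'. -/
noncomputable section

/-- for nonnegative `v` and `w' ∈ R(Mv, P^out)`, there are PCMs
`C`, `D` such that the scaled merging `H` satisfies `H ⟨v⟩_{P^in} = w'`. -/
theorem exists_pcms_scaledMerging_realizes {m n k ko : ℕ}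
    (M : Matrix (Fin m) (Fin n) ℝ)
    (Pin : Fin k → Finset (Fin n)) (Pout : Fin ko → Finset (Fin m))
    (hPin : IsPartition Pin) (hPout : IsPartition Pout)
    (v : Fin n → ℝ) (hv : ∀ i, 0 ≤ v i)
    (w' : Fin ko → ℝ) (hw' : InRepSet Pout (M.mulVec v) w') :
    ∃ (C : Matrix (Fin n) (Fin k) ℝ) (D : Matrix (Fin m) (Fin ko) ℝ),
      IsPCM Pin C ∧ IsPCM Pout D ∧
      (scaledMerging M Pin C D).mulVec (meanRep Pin v) = w' := by
  classical
  obtain ⟨hne, hdisj, hcov⟩ := hPin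
  have hcard : ∀ j, ((Pin j).card : ℝ) ≠ 0 := by
    intro j
    have := Finset.card_pos.mpr (hne j)
    positivity
  set s : Fin k → ℝ := fun j => ∑ i ∈ Pin j, v i with hsdef
  have hs0 : ∀ j, 0 ≤ s j := fun j => Finset.sum_nonneg fun i _ => hv i
  set u : Fin m → ℝ := M.mulVec v with hudef
  choose i1 hi1mem hi1le using fun l => (hw' l).1
  choose i2 hi2mem hi2le using fun l => (hw' l).2
  set t : Fin ko → ℝ := fun l =>
    if u (i1 l) = u (i2 l) then 0 else (w' l - u (i1 l)) / (u (i2 l) - u (i1 l)) with htdef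
  have ht01 : ∀ l, 0 ≤ t l ∧ t l ≤ 1 := by
    intro l
    simp only [htdef]
    split_ifs with h
    · exact ⟨le_refl 0, zero_le_one⟩
    · have hab : u (i1 l) < u (i2 l) := lt_of_le_of_ne ((hi1le l).trans (hi2le l)) h
      constructor
      · exact div_nonneg (by linarith [hi1le l]) (by linarith)
      · rw [div_le_one (by linarith)]; linarith [hi2le l]
  set C : Matrix (Fin n) (Fin k) ℝ := fun i j =>
    if i ∈ Pin j then (if s j = 0 then ((Pin j).card : ℝ)⁻¹ else v i / s j) else 0 with hCdef
  set D : Matrix (Fin m) (Fin ko) ℝ := fun i l =>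
    (if i = i1 l then 1 - t l else 0) + (if i = i2 l then t l else 0) with hDdef
  have hCpcm : IsPCM Pin C := by
    refine ⟨?_, ?_, ?_⟩
    · intro i j
      simp only [hCdef]
      split_ifs with h1 h2
      · positivity
      · exact div_nonneg (hv i) (hs0 j)
      · exact le_refl 0
    · intro j
      simp only [hCdef]
      rw [Finset.sum_ite_mem, Finset.univ_inter]
      split_ifs with h
      · rw [Finset.sum_const, nsmul_eq_mul, mul_inv_cancel₀ (hcard j)]
      · rw [← Finset.sum_div, div_self h]
    · intro i j h
      simp [hCdef, h]
  have hDpcm : IsPCM Pout D := by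
    refine ⟨?_, ?_, ?_⟩
    · intro i l
      obtain ⟨h0, h1⟩ := ht01 l
      simp only [hDdef]
      split_ifs <;> linarith
    · intro l
      simp only [hDdef]
      rw [Finset.sum_add_distrib, Finset.sum_ite_eq' Finset.univ (i1 l),
        Finset.sum_ite_eq' Finset.univ (i2 l)]
      simp
    · intro i l h
      have h1 : i ≠ i1 l := fun e => h (e ▸ hi1mem l)
      have h2 : i ≠ i2 l := fun e => h (e ▸ hi2mem l)
      simp [hDdef, h1, h2]
  refine ⟨C, D, hCpcm, hDpcm, ?_⟩
  have hCs : C.mulVec s = v := by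
    funext i
    obtain ⟨j0, hj0⟩ := hcov i
    have hvle : v i ≤ s j0 := Finset.single_le_sum (fun a _ => hv a) hj0
    rw [Matrix.mulVec, dotProduct]
    rw [Finset.sum_eq_single j0]
    · simp only [hCdef, hj0, if_true]
      split_ifs with h
      · rw [h, mul_zero]
        have : v i = 0 := le_antisymm (h ▸ hvle) (hv i)
        exact this.symm
      · exact div_mul_cancel₀ (v i) h
    · intro j _ hj
      have : i ∉ Pin j := by
        intro hmem
        exact (Finset.disjoint_left.mp (hdisj j j0 hj) hmem) hj0
      simp [hCdef, this]
    · intro h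
      exact absurd (Finset.mem_univ j0) h
  have hDu : ∀ l, ∑ i, D i l * u i = w' l := by
    intro l
    simp only [hDdef, add_mul, ite_mul, zero_mul]
    rw [Finset.sum_add_distrib, Finset.sum_ite_eq' Finset.univ (i1 l),
      Finset.sum_ite_eq' Finset.univ (i2 l)]
    simp only [Finset.mem_univ, if_true, htdef]
    split_ifs with h
    · have : u (i1 l) = w' l := le_antisymm (hi1le l) (h ▸ hi2le l)
      rw [← this, h]; ring
    · have hab : u (i1 l) < u (i2 l) := lt_of_le_of_ne ((hi1le l).trans (hi2le l)) h
      have hne' : u (i2 l) - u (i1 l) ≠ 0 := by linarith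
      field_simp
      ring
  funext l
  have step1 : (scaledMerging M Pin C D).mulVec (meanRep Pin v) l
      = ((D.transpose * M * C).mulVec s) l := by
    rw [Matrix.mulVec, Matrix.mulVec, dotProduct, dotProduct]
    refine Finset.sum_congr rfl fun j _ => ?_
    simp only [scaledMerging, scaleCols, meanRep]
    rw [mul_assoc]
    congr 1
    rw [mul_div_cancel₀ _ (hcard j)]
  rw [step1, ← Matrix.mulVec_mulVec, ← Matrix.mulVec_mulVec, hCs]
  rw [Matrix.mulVec, dotProduct]
  rw [← hDu l]
  refine Finset.sum_congr rfl fun i _ => ?_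
  rw [Matrix.transpose_apply]
end
end

section
/- Let M be an m×n real matrix, P^in a partitioning of {1,…,n} into k blocks, P^out a partitioning of {1,…,m}, v ∈ ℝ^n a vector with nonnegative entries, and σ : ℝ → ℝ a function satisfying the Weakened Intermediate Value Property. Then there exist a PCM C for P^in and a PCM D for P^out such that, with H = ScaleCols(Dᵀ M C, (|P^in_1|,…,|P^in_k|)), applying σ componentwise gives σ(H · ⟨v⟩_{P^in}) = ⟨σ(M v)⟩_{P^out}. -/
noncomputable section

/-- for nonnegative `v` and `σ` satisfying the WIVP, there are PCMs
`C`, `D` such that, with `H` the corresponding scaled merging,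
`σ(H ⟨v⟩_{P^in}) = ⟨σ(Mv)⟩_{P^out}` componentwise. -/
theorem exists_pcms_layer_sound {m n k ko : ℕ}
    (M : Matrix (Fin m) (Fin n) ℝ)
    (Pin : Fin k → Finset (Fin n)) (Pout : Fin ko → Finset (Fin m))
    (hPin : IsPartition Pin) (hPout : IsPartition Pout)
    (v : Fin n → ℝ) (hv : ∀ i, 0 ≤ v i)
    (σ : ℝ → ℝ) (hσ : WIVP σ) :
    ∃ (C : Matrix (Fin n) (Fin k) ℝ) (D : Matrix (Fin m) (Fin ko) ℝ),
      IsPCM Pin C ∧ IsPCM Pout D ∧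
      (fun j => σ ((scaledMerging M Pin C D).mulVec (meanRep Pin v) j)) =
        meanRep Pout (fun i => σ (M.mulVec v i)) := by
  classical
  obtain ⟨hPin1, hPin2, hPin3⟩ := hPin
  obtain ⟨hPout1, hPout2, hPout3⟩ := hPout
  set Mv : Fin m → ℝ := M.mulVec v with hMv
  set s : Fin k → ℝ := fun j => ∑ i ∈ Pin j, v i with hsdef
  have hs0 : ∀ j, 0 ≤ s j := fun j => Finset.sum_nonneg fun i _ => hv i
  -- pick an element of each input block
  have hpickex : ∀ j, ∃ i, i ∈ Pin j := fun j => (hPin1 j)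
  choose pick hpick using hpickex
  -- define C
  set C : Matrix (Fin n) (Fin k) ℝ := fun i j =>
    if s j = 0 then (if i = pick j then (1:ℝ) else 0)
    else (if i ∈ Pin j then v i / s j else 0) with hCdef
  have hCnn : ∀ i j, 0 ≤ C i j := by
    intro i j
    simp only [hCdef]
    split_ifs with h1 h2 h3
    · norm_num
    · norm_num
    · exact div_nonneg (hv i) (hs0 j)
    · norm_num
  have hCsum : ∀ j, ∑ i, C i j = 1 := by
    intro j
    by_cases h : s j = 0
    · simp [hCdef, h]
    · simp only [hCdef, if_neg h]
      rw [← Finset.sum_filter, Finset.filter_mem_eq_inter, Finset.univ_inter]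
      rw [← Finset.sum_div]
      exact div_self h
  have hCzero : ∀ i j, i ∉ Pin j → C i j = 0 := by
    intro i j hij
    simp only [hCdef]
    split_ifs with h1 h2
    · exact absurd (h2 ▸ hpick j) hij
    · rfl
    · rfl
  have hCPCM : IsPCM Pin C := ⟨hCnn, hCsum, hCzero⟩
  -- key reconstruction property
  have hCv : ∀ i, ∑ j, C i j * s j = v i := by
    intro i
    obtain ⟨j0, hj0⟩ := hPin3 i
    rw [Finset.sum_eq_single j0]
    · by_cases h : s j0 = 0
      · have : v i = 0 := by
          have := (Finset.sum_eq_zero_iff_of_nonneg (fun x _ => hv x)).mp h i hj0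
          exact this
        simp [h, this]
      · simp only [hCdef, if_neg h, if_pos hj0]
        exact div_mul_cancel₀ (v i) h
    · intro j _ hne
      by_cases h : s j = 0
      · simp [h]
      · have hnotin : i ∉ Pin j := by
          intro hin
          exact absurd hj0 (Finset.disjoint_left.mp (hPin2 j j0 hne) hin)
        simp [hCdef, if_neg h, hnotin]
    · intro h
      exact absurd (Finset.mem_univ j0) h
  -- WIVP gives per-output-block data
  have key : ∀ j' : Fin ko, ∃ i1, i1 ∈ Pout j' ∧ ∃ i2, i2 ∈ Pout j' ∧ ∃ b : ℝ,
      Mv i1 ≤ b ∧ b ≤ Mv i2 ∧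
      σ b = (∑ i ∈ Pout j', σ (Mv i)) / ((Pout j').card : ℝ) := by
    intro j'
    obtain ⟨c', hc'⟩ : ∃ c', (Pout j').card = c' + 1 :=
      ⟨(Pout j').card - 1, by
        have := Finset.card_pos.mpr (hPout1 j'); omega⟩
    let e := (Pout j').orderIsoOfFin hc'
    let f : Fin (c' + 1) → ℝ := fun t => Mv (e t)
    let π := Tuple.sort f
    obtain ⟨b, hb, hσb⟩ := hσ c' (f ∘ π) (Tuple.monotone_sort f)
    refine ⟨e (π 0), (e (π 0)).2, e (π (Fin.last c')), (e (π (Fin.last c'))).2, b,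
      hb.1, hb.2, ?_⟩
    rw [hσb]
    have hsum : ∑ i, σ ((f ∘ π) i) = ∑ i ∈ Pout j', σ (Mv i) := by
      have h1 : ∑ i, σ ((f ∘ π) i) = ∑ t, σ (f t) :=
        Equiv.sum_comp π (fun t => σ (f t))
      have h2 : ∑ t, σ (f t) = ∑ x : {x // x ∈ Pout j'}, σ (Mv x) :=
        Equiv.sum_comp e.toEquiv (fun x : {x // x ∈ Pout j'} => σ (Mv x))
      exact h1.trans (h2.trans (Finset.sum_coe_sort (Pout j') (fun i => σ (Mv i))))
    rw [hsum, hc']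
    push_cast
    ring_nf
  choose i1 hi1 i2 hi2 b hb1 hb2 hσb using key
  -- define D
  set l : Fin ko → ℝ := fun j' =>
    if Mv (i2 j') ≤ Mv (i1 j') then 1 else (Mv (i2 j') - b j') / (Mv (i2 j') - Mv (i1 j')) with hldef
  have hl0 : ∀ j', 0 ≤ l j' := by
    intro j'
    simp only [hldef]
    split_ifs with h
    · norm_num
    · push_neg at h
      exact div_nonneg (by linarith [hb2 j']) (by linarith)
  have hl1 : ∀ j', l j' ≤ 1 := by
    intro j'
    simp only [hldef]
    split_ifs with h
    · exact le_refl 1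
    · push_neg at h
      rw [div_le_one (by linarith)]
      linarith [hb1 j']
  set D : Matrix (Fin m) (Fin ko) ℝ := fun i j' =>
    l j' * (if i = i1 j' then 1 else 0) + (1 - l j') * (if i = i2 j' then 1 else 0) with hDdef
  have hDPCM : IsPCM Pout D := by
    refine ⟨?_, ?_, ?_⟩
    · intro i j'
      have := hl0 j'; have := hl1 j'
      simp only [hDdef]
      split_ifs <;> nlinarith
    · intro j'
      simp [hDdef, Finset.sum_add_distrib, ← Finset.mul_sum]
    · intro i j' hij
      have h1 : i ≠ i1 j' := fun h => hij (h ▸ hi1 j')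
      have h2 : i ≠ i2 j' := fun h => hij (h ▸ hi2 j')
      simp [hDdef, h1, h2]
  -- dot product of D column with Mv equals b
  have hDdot : ∀ j', ∑ i', D i' j' * Mv i' = b j' := by
    intro j'
    have hexp : ∑ i', D i' j' * Mv i' = l j' * Mv (i1 j') + (1 - l j') * Mv (i2 j') := by
      simp only [hDdef, add_mul, Finset.sum_add_distrib, mul_assoc, ← Finset.mul_sum,
        ite_mul, one_mul, zero_mul]
      rw [Finset.sum_ite_eq' Finset.univ (i1 j') Mv, Finset.sum_ite_eq' Finset.univ (i2 j') Mv]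
      simp
    rw [hexp]
    simp only [hldef]
    split_ifs with h
    · have h1 := hb1 j'; have h2 := hb2 j'
      have : Mv (i1 j') = b j' := le_antisymm h1 (le_trans h2 h)
      rw [this]; ring
    · push_neg at h
      have hne : Mv (i2 j') - Mv (i1 j') ≠ 0 := by linarith
      field_simp
      ring
  refine ⟨C, D, hCPCM, hDPCM, ?_⟩
  funext j'
  have harg : (scaledMerging M Pin C D).mulVec (meanRep Pin v) j' = b j' := by
    have hterm : ∀ j, (scaledMerging M Pin C D) j' j * meanRep Pin v j
        = (D.transpose * M * C) j' j * s j := by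
      intro j
      have hcard : ((Pin j).card : ℝ) ≠ 0 := by
        have := Finset.card_pos.mpr (hPin1 j)
        positivity
      simp only [scaledMerging, scaleCols, meanRep]
      field_simp
      ring
    calc (scaledMerging M Pin C D).mulVec (meanRep Pin v) j'
        = ∑ j, (scaledMerging M Pin C D) j' j * meanRep Pin v j := by
          simp [Matrix.mulVec, dotProduct]
      _ = ∑ j, (D.transpose * M * C) j' j * s j :=
          Finset.sum_congr rfl (fun j _ => hterm j)
      _ = ∑ j, ∑ i, (D.transpose * M) j' i * (C i j * s j) := by
          simp [Matrix.mul_apply, Finset.sum_mul, mul_assoc]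
      _ = ∑ i, (D.transpose * M) j' i * (∑ j, C i j * s j) := by
          rw [Finset.sum_comm]; simp [Finset.mul_sum]
      _ = ∑ i, (D.transpose * M) j' i * v i := by simp [hCv]
      _ = ∑ i', D i' j' * Mv i' := by
          simp only [Matrix.mul_apply, Matrix.transpose_apply, Finset.sum_mul]
          rw [Finset.sum_comm]
          simp [hMv, Matrix.mulVec, dotProduct, Finset.mul_sum, mul_assoc]
      _ = b j' := hDdot j'
  rw [harg, hσb j']
  simp [meanRep]
end
end

section
/- Consider a DNN with layer sizes s_0, s_1, …, s_n given by layers (W^(1), σ^(1)), …, (W^(n), σ^(n)), where each W^(i) is an s_i × s_{i−1} real matrix and σ^(i) : ℝ → ℝ, and the network maps v ∈ ℝ^{s_0} to v^(n), where v^(0) = v and v^(i) = σ^(i)(W^(i) v^(i−1)) with σ^(i) applied componentwise. Suppose every σ^(i) has nonnegative outputs and satisfies the Weakened Intermediate Value Property. Let P^(0), …, P^(n) be partitionings of {1,…,s_0}, …, {1,…,s_n} respectively, with P^(0) and P^(n) the singleton partitionings (every block a singleton). Then for every input v ∈ ℝ^{s_0} there exist matrices H^(1), …, H^(n), where each H^(i)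 is a scaled merging of W^(i) determined by some PCM for P^(i−1) and some PCM for P^(i), such that the network with layers (H^(1), σ^(1)), …, (H^(n), σ^(n)) maps v to the same output as the original DNN. -/
noncomputable section

/-- The output of the DNN with layer sizes `s 0, …, s m`, weight matrices `W i`
(from `s i` to `s (i+1)` dimensions) and componentwise activations `σ i`:
`v^(0) = v` and `v^(i+1) = σ i (W i · v^(i))`. -/
def dnnOut (s : ℕ → ℕ) (W : ∀ i : ℕ, Matrix (Fin (s (i + 1))) (Fin (s i)) ℝ)
    (σ : ℕ → ℝ → ℝ) (v : Fin (s 0) → ℝ) : ∀ m : ℕ, Fin (s m) → ℝ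
  | 0 => v
  | m + 1 => fun j => σ m ((W m).mulVec (dnnOut s W σ v m) j)

lemma C_lemma {sN kN : ℕ} (Pi : Fin kN → Finset (Fin sN)) (hPi : IsPartition Pi)
    (u : Fin sN → ℝ)
    (hcase : (∀ b, 0 ≤ u b) ∨ (∀ q, (Pi q).card = 1)) :
    ∃ C : Matrix (Fin sN) (Fin kN) ℝ, IsPCM Pi C ∧
      ∀ b, ∑ q, C b q * (((Pi q).card : ℝ) * meanRep Pi u q) = u b := by
  obtain ⟨hne, hdisj, hcover⟩ := hPi
  set S : Fin kN → ℝ := fun q => ∑ b ∈ Pi q, u b with hS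
  have hcard : ∀ q, (0:ℝ) < ((Pi q).card : ℝ) := by
    intro q; exact_mod_cast (hne q).card_pos
  have hzero : ∀ q, S q = 0 → ∀ b ∈ Pi q, u b = 0 := by
    intro q hq b hb
    rcases hcase with hu | hk
    · exact (Finset.sum_eq_zero_iff_of_nonneg (fun i _ => hu i)).mp hq b hb
    · obtain ⟨x, hx⟩ := Finset.card_eq_one.mp (hk q)
      have : b = x := by simpa [hx] using hb
      subst this
      simpa [hS, hx] using hq
  refine ⟨fun b q => if b ∈ Pi q then (if S q = 0 then ((Pi q).card : ℝ)⁻¹ else u b / S q) else 0,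
    ⟨?_, ?_, ?_⟩, ?_⟩
  · intro i j
    by_cases hij : i ∈ Pi j
    · simp only [hij, if_true]
      by_cases hz : S j = 0
      · simp [hz, le_of_lt (inv_pos.mpr (hcard j))]
      · simp only [hz, if_false]
        rcases hcase with hu | hk
        · have hS0 : 0 ≤ S j := Finset.sum_nonneg (fun i _ => hu i)
          exact div_nonneg (hu i) hS0
        · obtain ⟨x, hx⟩ := Finset.card_eq_one.mp (hk j)
          have hix : i = x := by simpa [hx] using hij
          subst hix
          have : S j = u i := by simp [hS, hx]
          rw [this, div_self (by rw [this] at hz; exact hz)]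
          norm_num
    · simp [hij]
  · intro j
    rw [Finset.sum_congr rfl (fun i _ => rfl), ← Finset.sum_subset (Finset.subset_univ (Pi j))
      (by intro x _ hx; simp [hx])]
    by_cases hz : S j = 0
    · have hcongr : ∀ i ∈ Pi j, (if i ∈ Pi j then (if S j = 0 then ((Pi j).card : ℝ)⁻¹ else u i / S j) else 0) = ((Pi j).card : ℝ)⁻¹ := fun i hi => by simp [hi, hz]
      rw [Finset.sum_congr rfl hcongr, Finset.sum_const, nsmul_eq_mul,
        mul_inv_cancel₀ (ne_of_gt (hcard j))]
    · have hcongr : ∀ i ∈ Pi j, (if i ∈ Pi j then (if S j = 0 then ((Pi j).card : ℝ)⁻¹ else u i / S j) else 0) = u i / S j := fun i hi => by simp [hi, hz]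
      rw [Finset.sum_congr rfl hcongr, ← Finset.sum_div, div_self hz]
  · intro i j hij; simp [hij]
  · intro b
    obtain ⟨q₀, hq₀⟩ := hcover b
    have hmean : ∀ q, ((Pi q).card : ℝ) * meanRep Pi u q = S q := by
      intro q
      rw [meanRep, mul_div_cancel₀ _ (ne_of_gt (hcard q))]
    rw [Finset.sum_eq_single q₀]
    · rw [hmean]
      by_cases hz : S q₀ = 0
      · simp [hq₀, hz, hzero q₀ hz b hq₀]
      · simp only [hq₀, if_true, hz, if_false]
        exact div_mul_cancel₀ _ hz
    · intro q _ hqne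
      have : b ∉ Pi q := by
        intro hb
        exact Finset.disjoint_left.mp (hdisj q q₀ hqne) hb hq₀
      simp [this]
    · intro h; exact absurd (Finset.mem_univ q₀) h

lemma D_lemma {mN ko : ℕ} (Po : Fin ko → Finset (Fin mN)) (hPo : IsPartition Po)
    (σ : ℝ → ℝ) (hσ : WIVP σ) (y : Fin mN → ℝ) :
    ∃ D : Matrix (Fin mN) (Fin ko) ℝ, IsPCM Po D ∧
      ∀ p, σ (∑ x, D x p * y x) = meanRep Po (fun x => σ (y x)) p := by
  have hcol : ∀ p, ∃ col : Fin mN → ℝ, (∀ x, 0 ≤ col x) ∧ (∑ x, col x = 1) ∧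
      (∀ x, x ∉ Po p → col x = 0) ∧
      σ (∑ x, col x * y x) = meanRep Po (fun x => σ (y x)) p := by
    intro p
    set B := Po p with hB
    have hcardpos : 0 < B.card := (hPo.1 p).card_pos
    obtain ⟨c', hc'⟩ : ∃ c', c' + 1 = B.card := ⟨B.card - 1, Nat.succ_pred_eq_of_pos hcardpos⟩
    set e : Fin (c' + 1) → Fin mN := fun i => ↑(B.equivFin.symm (Fin.cast hc' i)) with he
    have heB : ∀ i, e i ∈ B := fun i => (B.equivFin.symm (Fin.cast hc' i)).2
    set g : Fin (c' + 1) → ℝ := fun i => y (e i) with hg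
    set a : Fin (c' + 1) → ℝ := g ∘ ⇑(Tuple.sort g) with ha
    obtain ⟨b, hbmem, hbval⟩ := hσ c' a (Tuple.monotone_sort g)
    have hsum : ∀ f : ℝ → ℝ, ∑ i, f (a i) = ∑ x ∈ B, f (y x) := by
      intro f
      have h1 : ∑ i, f (a i) = ∑ i, f (g i) := Equiv.sum_comp (Tuple.sort g) (fun i => f (g i))
      have h2 : ∑ i, f (g i) = ∑ j : Fin B.card, f (y ((B.equivFin.symm j) : Fin mN)) :=
        Equiv.sum_comp (finCongr hc') (fun j => f (y ((B.equivFin.symm j) : Fin mN)))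
      have h3 : ∑ j : Fin B.card, f (y ((B.equivFin.symm j) : Fin mN)) = ∑ x : B, f (y ↑x) :=
        Equiv.sum_comp B.equivFin.symm (fun x : B => f (y ↑x))
      rw [h1, h2, h3]
      exact Finset.sum_coe_sort B (fun x => f (y x))
    have hσb : σ b = meanRep Po (fun x => σ (y x)) p := by
      rw [hbval, meanRep, hsum σ, ← hB, ← hc']
      push_cast
      ring_nf
    set i₀ : Fin mN := e (Tuple.sort g 0) with hi₀
    set i₁ : Fin mN := e (Tuple.sort g (Fin.last c')) with hi₁
    have hyi₀ : y i₀ = a 0 := rfl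
    have hyi₁ : y i₁ = a (Fin.last c') := rfl
    obtain ⟨hb1, hb2⟩ := Set.mem_Icc.mp hbmem
    obtain ⟨lam, hl0, hl1, hlval⟩ : ∃ lam : ℝ, 0 ≤ lam ∧ lam ≤ 1 ∧
        lam * a 0 + (1 - lam) * a (Fin.last c') = b := by
      by_cases hA : a (Fin.last c') = a 0
      · refine ⟨1, zero_le_one, le_refl _, ?_⟩
        have : b = a 0 := le_antisymm (hA ▸ hb2) hb1
        rw [this]; ring
      · have hlt : a 0 < a (Fin.last c') := lt_of_le_of_ne (hb1.trans hb2) (Ne.symm hA)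
        have hd : a (Fin.last c') - a 0 ≠ 0 := sub_ne_zero_of_ne (Ne.symm (ne_of_lt hlt))
        refine ⟨(a (Fin.last c') - b) / (a (Fin.last c') - a 0), ?_, ?_, ?_⟩
        · exact div_nonneg (sub_nonneg.mpr hb2) (le_of_lt (sub_pos.mpr hlt))
        · rw [div_le_one (sub_pos.mpr hlt)]; linarith
        · field_simp; ring
    refine ⟨fun x => (if x = i₀ then lam else 0) + (if x = i₁ then 1 - lam else 0),
      ?_, ?_, ?_, ?_⟩
    · intro x
      apply add_nonneg <;> split <;> simp [hl0, sub_nonneg.mpr hl1]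
    · rw [Finset.sum_add_distrib, Finset.sum_ite_eq' Finset.univ i₀ (fun _ => lam),
        Finset.sum_ite_eq' Finset.univ i₁ (fun _ => 1 - lam)]
      simp
    · intro x hx
      have h0 : x ≠ i₀ := fun h => hx (h ▸ heB _)
      have h1 : x ≠ i₁ := fun h => hx (h ▸ heB _)
      simp [h0, h1]
    · have : ∑ x, ((if x = i₀ then lam else 0) + (if x = i₁ then 1 - lam else 0)) * y x = b := by
        have := hlval
        rw [Finset.sum_congr rfl (fun x _ => add_mul _ _ (y x)), Finset.sum_add_distrib]
        have e0 : ∀ x, (if x = i₀ then lam else 0) * y x = if x = i₀ then lam * y x else 0 := by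
          intro x; split <;> simp
        have e1 : ∀ x, (if x = i₁ then 1 - lam else 0) * y x = if x = i₁ then (1-lam) * y x else 0 := by
          intro x; split <;> simp
        simp_rw [e0, e1, Finset.sum_ite_eq' Finset.univ i₀, Finset.sum_ite_eq' Finset.univ i₁]
        simp only [Finset.mem_univ, if_true, hyi₀, hyi₁]
        linarith [hlval]
      rw [this, hσb]
  choose col h1 h2 h3 h4 using hcol
  exact ⟨fun x p => col p x, ⟨fun i j => h1 j i, h2, fun i j => h3 j i⟩, h4⟩
lemma layer_lemma {sN mN kN ko : ℕ} (Pi : Fin kN → Finset (Fin sN))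
    (Po : Fin ko → Finset (Fin mN)) (hPi : IsPartition Pi) (hPo : IsPartition Po)
    (W : Matrix (Fin mN) (Fin sN) ℝ) (σ : ℝ → ℝ) (hσ : WIVP σ) (u : Fin sN → ℝ)
    (hcase : (∀ b, 0 ≤ u b) ∨ (∀ q, (Pi q).card = 1)) :
    ∃ (C : Matrix (Fin sN) (Fin kN) ℝ) (D : Matrix (Fin mN) (Fin ko) ℝ),
      IsPCM Pi C ∧ IsPCM Po D ∧
      ∀ p, σ ((scaledMerging W Pi C D).mulVec (meanRep Pi u) p) =
        meanRep Po (fun x => σ (W.mulVec u x)) p := by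
  obtain ⟨C, hC, hCval⟩ := C_lemma Pi hPi u hcase
  obtain ⟨D, hD, hDval⟩ := D_lemma Po hPo σ hσ (W.mulVec u)
  refine ⟨C, D, hC, hD, fun p => ?_⟩
  have key : (scaledMerging W Pi C D).mulVec (meanRep Pi u) p
      = ∑ x, D x p * W.mulVec u x := by
    unfold scaledMerging scaleCols Matrix.mulVec
    simp only [dotProduct]
    calc ∑ q, (D.transpose * W * C) p q * ((Pi q).card : ℝ) * meanRep Pi u q
        = ∑ q, ∑ b, (D.transpose * W) p b * (C b q * (((Pi q).card : ℝ) * meanRep Pi u q)) := by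
          apply Finset.sum_congr rfl; intro q _
          rw [Matrix.mul_apply, Finset.sum_mul, Finset.sum_mul]
          apply Finset.sum_congr rfl; intro b _; ring
      _ = ∑ b, (D.transpose * W) p b * ∑ q, C b q * (((Pi q).card : ℝ) * meanRep Pi u q) := by
          rw [Finset.sum_comm]
          simp_rw [Finset.mul_sum]
      _ = ∑ b, (D.transpose * W) p b * u b := by simp_rw [hCval]
      _ = ∑ x, D x p * W.mulVec u x := by
          simp_rw [Matrix.mul_apply, Finset.sum_mul, Matrix.transpose_apply]
          rw [Finset.sum_comm]
          apply Finset.sum_congr rfl; intro x _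
          rw [Matrix.mulVec, dotProduct, Finset.mul_sum]
          apply Finset.sum_congr rfl; intro b _; ring
  rw [key, hDval]

lemma dnnOut_congr (s : ℕ → ℕ) (W W' : ∀ i : ℕ, Matrix (Fin (s (i + 1))) (Fin (s i)) ℝ)
    (σ : ℕ → ℝ → ℝ) (v : Fin (s 0) → ℝ) (m : ℕ) (h : ∀ i < m, W i = W' i) :
    dnnOut s W σ v m = dnnOut s W' σ v m := by
  induction m with
  | zero => rfl
  | succ m ih =>
    have h1 := ih (fun i hi => h i (Nat.lt_succ_of_lt hi))
    show (fun j => σ m ((W m).mulVec (dnnOut s W σ v m) j)) = _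
    rw [h1, h m (Nat.lt_succ_self m)]
    rfl

/-- soundness of the layer-wise abstraction algorithm.  If all
activations are nonnegative and satisfy the WIVP, and the input/output
partitionings are singleton, then for every input `v` we can instantiate each
abstract layer by a scaled merging `H i` of `W i` (determined by PCMs for
`P i` and `P (i+1)`) so that the instantiated network maps (the singleton
relabeling `⟨v⟩_{P 0}` of) `v` to (the singleton relabeling `⟨N(v)⟩_{P n}` of)
the original network's output. -/
theorem layerwise_abstraction_sound (n : ℕ) (hn : 0 < n) (s k : ℕ → ℕ)
    (W : ∀ i : ℕ, Matrix (Fin (s (i + 1))) (Fin (s i)) ℝ)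
    (σ : ℕ → ℝ → ℝ)
    (hpos : ∀ i x, 0 ≤ σ i x) (hwivp : ∀ i, WIVP (σ i))
    (P : ∀ i : ℕ, Fin (k i) → Finset (Fin (s i)))
    (hP : ∀ i, IsPartition (P i))
    (hP0 : ∀ j, (P 0 j).card = 1) (hPn : ∀ j, (P n j).card = 1)
    (v : Fin (s 0) → ℝ) :
    ∃ H : ∀ i : ℕ, Matrix (Fin (k (i + 1))) (Fin (k i)) ℝ,
      (∀ i, i < n → ∃ (C : Matrix (Fin (s i)) (Fin (k i)) ℝ)
        (D : Matrix (Fin (s (i + 1))) (Fin (k (i + 1))) ℝ),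
        IsPCM (P i) C ∧ IsPCM (P (i + 1)) D ∧
        H i = scaledMerging (W i) (P i) C D) ∧
      dnnOut k H σ (meanRep (P 0) v) n = meanRep (P n) (dnnOut s W σ v n) := by
  have aux : ∀ m : ℕ, ∃ H : ∀ i : ℕ, Matrix (Fin (k (i + 1))) (Fin (k i)) ℝ,
      (∀ i, i < m → ∃ (C : Matrix (Fin (s i)) (Fin (k i)) ℝ)
        (D : Matrix (Fin (s (i + 1))) (Fin (k (i + 1))) ℝ),
        IsPCM (P i) C ∧ IsPCM (P (i + 1)) D ∧
        H i = scaledMerging (W i) (P i) C D) ∧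
      dnnOut k H σ (meanRep (P 0) v) m = meanRep (P m) (dnnOut s W σ v m) := by
    intro m
    induction m with
    | zero => exact ⟨fun _ => 0, fun i hi => absurd hi (Nat.not_lt_zero i), rfl⟩
    | succ m ih =>
      obtain ⟨H, hH, heq⟩ := ih
      set u : Fin (s m) → ℝ := dnnOut s W σ v m with hu
      have hcase : (∀ b, 0 ≤ u b) ∨ (∀ q, (P m q).card = 1) := by
        cases m with
        | zero => exact Or.inr hP0
        | succ j => exact Or.inl (fun b => hpos j _)
      obtain ⟨C, D, hC, hD, hlayer⟩ :=
        layer_lemma (P m) (P (m + 1)) (hP m) (hP (m + 1)) (W m) (σ m) (hwivp m) u hcase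
      set Hm := scaledMerging (W m) (P m) C D with hHm
      refine ⟨Function.update H m Hm, ?_, ?_⟩
      · intro i hi
        rcases Nat.lt_succ_iff_lt_or_eq.mp hi with h | h
        · obtain ⟨C', D', hC', hD', hHi⟩ := hH i h
          exact ⟨C', D', hC', hD', by rw [Function.update_of_ne (Nat.ne_of_lt h) Hm H]; exact hHi⟩
        · subst h
          exact ⟨C, D, hC, hD, by rw [Function.update_self]⟩
      · have hstab : dnnOut k (Function.update H m Hm) σ (meanRep (P 0) v) m
            = dnnOut k H σ (meanRep (P 0) v) m :=
          dnnOut_congr k _ _ σ _ m (fun i hi => Function.update_of_ne (Nat.ne_of_lt hi) Hm H)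
        funext j
        show σ m ((Function.update H m Hm m).mulVec
          (dnnOut k (Function.update H m Hm) σ (meanRep (P 0) v) m) j) = _
        rw [Function.update_self, hstab, heq]
        exact hlayer j
  exact aux n
end
end

section
/- Let σ : ℝ → ℝ and let x, y ∈ ℝ satisfy σ(x) < 0 < σ(y). Then for every z ∈ [min(x,y), max(x,y)] and all a, b ∈ [0, 2], it is not the case that both a·σ(z) = σ(x) and b·σ(z) = σ(y). Consequently, the output (σ(x), σ(y)) of the DNN v ↦ (σ(x·v), σ(y·v)) at input v = 1 is not realized by any instantiation of the interval neural network obtained by merging its two hidden dimensions, whose hidden weight ranges over [min(x,y), max(x,y)] and whose two output weights range over [0, 2]. -/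
/-- if `σ x < 0 < σ y`, then for every `z ∈ [min x y, max x y]`
and all `a, b ∈ [0, 2]`, `(a·σ z, b·σ z) ≠ (σ x, σ y)`; i.e., no instantiation
of the interval network obtained by merging the two hidden dimensions of
`v ↦ (σ (x·v), σ (y·v))` realizes the DNN's output `(σ x, σ y)` at input `1`. -/
theorem mixed_sign_not_overapproximated (σ : ℝ → ℝ) (x y : ℝ)
    (hx : σ x < 0) (hy : 0 < σ y) :
    ∀ z ∈ Set.Icc (min x y) (max x y), ∀ a ∈ Set.Icc (0 : ℝ) 2,
      ∀ b ∈ Set.Icc (0 : ℝ) 2, ¬ (a * σ z = σ x ∧ b * σ z = σ y) := by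
  rintro z _ a ⟨ha0, _⟩ b ⟨hb0, _⟩ ⟨hA, hB⟩
  nlinarith [mul_nonneg ha0 hb0, mul_nonneg (mul_nonneg ha0 hb0) (sq_nonneg (σ z))]
end

section
/- Define φ(x) = x if x ≥ 0 and φ(x) = 0.5·x if x < 0 (Leaky ReLU with slope 0.5). There do not exist c ∈ [−1, 1] and b, d ∈ [0, 2] such that 2·φ(c) = φ(1) + φ(−1), b·φ(c) = φ(1), and d·φ(c) = φ(−1). Since φ(1)+φ(−1) = 0.5, φ(1) = 1, and φ(−1) = −0.5, the interval neural network obtained by merging the two hidden dimensions of the DNN x ↦ (φ(x)+φ(−x), φ(x), φ(−x)) does not over-approximate that DNN: its output set at input 1 does not contain the DNN's output (0.5, 1, −0.5). -/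
/-- Leaky ReLU with slope `0.5`: `φ(x) = x` if `x ≥ 0`, else `0.5·x`. -/
noncomputable def leakyReLU (x : ℝ) : ℝ := if 0 ≤ x then x else 0.5 * x

/-- no instantiation (`c ∈ [−1,1]`, `b, d ∈ [0,2]`, first output
weight `2`) of the interval network obtained by merging the two hidden Leaky
ReLU dimensions of `x ↦ (φ x + φ (−x), φ x, φ (−x))` reproduces the DNN's
output `(φ 1 + φ (−1), φ 1, φ (−1)) = (0.5, 1, −0.5)` at input `1`; hence the
interval network does not over-approximate the DNN. -/
theorem inn_leaky_relu_not_overapproximates :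
    (leakyReLU 1 + leakyReLU (-1) = 0.5 ∧ leakyReLU 1 = 1 ∧
      leakyReLU (-1) = -0.5) ∧
    ¬ ∃ c ∈ Set.Icc (-1 : ℝ) 1, ∃ b ∈ Set.Icc (0 : ℝ) 2,
        ∃ d ∈ Set.Icc (0 : ℝ) 2,
          2 * leakyReLU c = leakyReLU 1 + leakyReLU (-1) ∧
          b * leakyReLU c = leakyReLU 1 ∧
          d * leakyReLU c = leakyReLU (-1) := by
  have h1 : leakyReLU 1 = 1 := by norm_num [leakyReLU]
  have h2 : leakyReLU (-1) = -0.5 := by norm_num [leakyReLU]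
  refine ⟨⟨by rw [h1, h2]; norm_num, h1, h2⟩, ?_⟩
  rintro ⟨c, hc, b, hb, d, hd, e1, e2, e3⟩
  rw [h1, h2] at e1; rw [h1] at e2
  have hφ : leakyReLU c = 0.25 := by linarith
  rw [hφ] at e2
  have : b = 4 := by linarith
  linarith [hb.2]
end

section
/- Define t(x) = x if x ≥ 1 and t(x) = 0 otherwise (the threshold activation with parameters 1 and 0). For every c ∈ [−1, 1], 2·t(c) ≠ t(1) + t(−1); since t(1) + t(−1) = 1, this means 2·t(c) ≠ 1 for all c ∈ [−1, 1]. Hence the interval neural network obtained by merging the two hidden dimensions of the DNN x ↦ (t(x)+t(−x), t(x), t(−x)) does not over-approximate that DNN: no instantiation reproduces the first output component of the DNN at input 1. -/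
/-- Threshold activation `thresh(x; 1, 0)`: `t(x) = x` if `x ≥ 1`, else `0`. -/
noncomputable def threshAct (x : ℝ) : ℝ := if 1 ≤ x then x else 0

/-- `t 1 + t (−1) = 1`, and for every `c ∈ [−1, 1]`,
`2·t c ≠ t 1 + t (−1)` (equivalently `2·t c ≠ 1`); hence no instantiation of
the interval network obtained by merging the two hidden dimensions of
`x ↦ (t x + t (−x), t x, t (−x))` reproduces the first output component of
the DNN at input `1`, so the interval network does not over-approximate it. -/
theorem inn_thresh_not_overapproximates :
    threshAct 1 + threshAct (-1) = 1 ∧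
    ∀ c ∈ Set.Icc (-1 : ℝ) 1,
      2 * threshAct c ≠ threshAct 1 + threshAct (-1) ∧
      2 * threshAct c ≠ 1 := by
  have h : threshAct 1 + threshAct (-1) = 1 := by
    simp [threshAct]
  refine ⟨h, fun c hc => ?_⟩
  have key : 2 * threshAct c ≠ 1 := by
    unfold threshAct
    split_ifs with h1
    · have : c = 1 := le_antisymm hc.2 h1
      subst this; norm_num
    · norm_num
  exact ⟨by rw [h]; exact key, key⟩
end
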